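/- arXiv:2105.14047 — 8 statements merged into one kernel-verified Lean document; each statement's English description precedes it below -/
import Mathlib

section
/- If α ∈ ℤ[i] is odd, then there exists e ∈ {0,1,2,3} such that α ≡ i^e (mod γ³), i.e., γ³ divides α − i^e in ℤ[i]. -/
/-! The residue of `α` modulo `γ³ = -2 + 2i` is determined by `re α ± im α` modulo `4`, and
`α` is odd exactly when `re α + im α` is odd. Of the eight residues, the four odd ones are
hit by `1, i, -1, -i`. -/

namespace GaussianInt

theorem one_add_i_dvd_iff (z : GaussianInt) :
    (⟨1, 1⟩ : GaussianInt) ∣ z ↔ 2 ∣ z.re + z.im := by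
  constructor
  · rintro ⟨w, rfl⟩
    exact ⟨w.re, by simp only [Zsqrtd.re_mul, Zsqrtd.im_mul]; ring⟩
  · rintro ⟨k, hk⟩
    exact ⟨⟨k, k - z.re⟩, by ext <;> simp only [Zsqrtd.re_mul, Zsqrtd.im_mul] <;> omega⟩

theorem one_add_i_pow_three_dvd_iff (z : GaussianInt) :
    (⟨1, 1⟩ : GaussianInt) ^ 3 ∣ z ↔ 4 ∣ z.re - z.im ∧ 4 ∣ z.re + z.im := by
  have hγ3 : (⟨1, 1⟩ : GaussianInt) ^ 3 = ⟨-2, 2⟩ := by decide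
  rw [hγ3]
  constructor
  · rintro ⟨w, rfl⟩
    exact ⟨⟨-w.re, by simp only [Zsqrtd.re_mul, Zsqrtd.im_mul]; ring⟩,
      ⟨-w.im, by simp only [Zsqrtd.re_mul, Zsqrtd.im_mul]; ring⟩⟩
  · rintro ⟨⟨u, hu⟩, ⟨v, hv⟩⟩
    exact ⟨⟨-u, -v⟩, by ext <;> simp only [Zsqrtd.re_mul, Zsqrtd.im_mul] <;> omega⟩

end GaussianInt

open GaussianInt in
/-- If α ∈ ℤ[i] is odd, then there exists e ∈ {0,1,2,3} such that
α ≡ i^e (mod γ³), i.e., γ³ divides α − i^e in ℤ[i]. -/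
theorem stmt_1 (α : GaussianInt) (hodd : ¬ ((⟨1, 1⟩ : GaussianInt) ∣ α)) :
    ∃ e : ℕ, e ≤ 3 ∧ (⟨1, 1⟩ : GaussianInt) ^ 3 ∣ α - (⟨0, 1⟩ : GaussianInt) ^ e := by
  rw [one_add_i_dvd_iff] at hodd
  simp only [one_add_i_pow_three_dvd_iff, Zsqrtd.re_sub, Zsqrtd.im_sub]
  have hi0 : (⟨0, 1⟩ : GaussianInt) ^ 0 = ⟨1, 0⟩ := rfl
  have hi1 : (⟨0, 1⟩ : GaussianInt) ^ 1 = ⟨0, 1⟩ := by decide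
  have hi2 : (⟨0, 1⟩ : GaussianInt) ^ 2 = ⟨-1, 0⟩ := by decide
  have hi3 : (⟨0, 1⟩ : GaussianInt) ^ 3 = ⟨0, -1⟩ := by decide
  rcases (by omega : (4 ∣ α.re - 1 - α.im ∧ 4 ∣ α.re - 1 + α.im) ∨
      (4 ∣ α.re - (α.im - 1) ∧ 4 ∣ α.re + (α.im - 1)) ∨
      (4 ∣ α.re + 1 - α.im ∧ 4 ∣ α.re + 1 + α.im) ∨
      (4 ∣ α.re - (α.im + 1) ∧ 4 ∣ α.re + (α.im + 1))) with h | h | h | h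
  · exact ⟨0, by norm_num, by simp only [hi0]; omega⟩
  · exact ⟨1, by norm_num, by simp only [hi1]; omega⟩
  · exact ⟨2, by norm_num, by simp only [hi2]; omega⟩
  · exact ⟨3, by norm_num, by simp only [hi3]; omega⟩
end

section
/- Let v be a unit vector in ℤ[i]^n (i.e., v†v = 1) and let p ∈ {0, …, n−1}. Then there exists an n×n matrix G that is a product of one-level matrices of type i and two-level matrices of type X such that G·v = e_p, where e_p is the p-th standard basis vector. -/
/-! The norms of the entries of `v`, nonnegative integers, sum to `v†v = 1`, so `v = i^m e_q`
for some `q` and `m`: the units of `ℤ[i]` are the powers of `i`. Then `i_{[q]}^{3m}` sends `v`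
to `e_q`, and `X_{[p,q]}` (the swap of `p` and `q`, or nothing if `p = q`) sends `e_q` to
`e_p`. -/

open Matrix

noncomputable section

/-- The ring ℤ[i] of Gaussian integers, viewed as a subring of ℂ. -/
def Zi : Subring ℂ := Subring.closure {Complex.I}

/-- The ring ℤ[1/2, i]: the smallest subring of ℂ containing 1/2 and i. -/
def Dhi : Subring ℂ := Subring.closure {(1/2 : ℂ), Complex.I}

/-- The one-level matrix `z_{[j]}`: the n×n identity matrix with the (j,j) entry
replaced by z. -/
def oneLevel (n : ℕ) (z : ℂ) (j : Fin n) : Matrix (Fin n) (Fin n) ℂ :=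
  fun a b => if a = j ∧ b = j then z else if a = b then 1 else 0

/-- The two-level matrix `U_{[j,k]}`: the n×n identity matrix with the four entries
in rows and columns j, k replaced by the corresponding entries of the 2×2 matrix U. -/
def twoLevel (n : ℕ) (U : Matrix (Fin 2) (Fin 2) ℂ) (j k : Fin n) :
    Matrix (Fin n) (Fin n) ℂ :=
  fun a b =>
    if a = j then (if b = j then U 0 0 else if b = k then U 0 1 else 0)
    else if a = k then (if b = j then U 1 0 else if b = k then U 1 1 else 0)
    else if a = b then 1 else 0

/-- The 2×2 matrix X. -/
def Xmat : Matrix (Fin 2) (Fin 2) ℂ := !![0, 1; 1, 0]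

/-- The 2×2 matrix K = (1/(1+i))·[[1,1],[1,−1]]. -/
def Kmat : Matrix (Fin 2) (Fin 2) ℂ := (1 / (1 + Complex.I)) • !![1, 1; 1, -1]

/-- The conjugate transpose K† of K. -/
def Kdag : Matrix (Fin 2) (Fin 2) ℂ := Kmatᴴ

/-- The least denominator exponent of t: the least k with γ^k·t ∈ ℤ[i],
where γ = 1 + i. -/
def lde (t : ℂ) : ℕ := sInf {k : ℕ | (1 + Complex.I) ^ k * t ∈ Zi}

open Complex

lemma Zi_le_range_toComplex : Zi ≤ GaussianInt.toComplex.range :=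
  Subring.closure_le.mpr <| Set.singleton_subset_iff.mpr
    ⟨⟨0, 1⟩, by simp [GaussianInt.toComplex_def']⟩

lemma Int.exists_eq_single_of_sum_eq_one {ι : Type*} [Fintype ι] [DecidableEq ι] {f : ι → ℤ}
    (hf : ∀ i, 0 ≤ f i) (hsum : ∑ i, f i = 1) : ∃ q, f = Pi.single q 1 := by
  obtain ⟨q, -, hq⟩ :=
    Finset.exists_ne_zero_of_sum_ne_zero (s := Finset.univ) (f := f) (by simp [hsum])
  have hsplit : f q + ∑ i ∈ Finset.univ.erase q, f i = 1 :=
    (Finset.add_sum_erase _ f (Finset.mem_univ q)).trans hsum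
  have hrest : 0 ≤ ∑ i ∈ Finset.univ.erase q, f i := Finset.sum_nonneg fun i _ => hf i
  have hfq : f q = 1 := by have := hf q; omega
  have hrest0 : ∀ i ∈ Finset.univ.erase q, f i = 0 :=
    (Finset.sum_eq_zero_iff_of_nonneg fun i _ => hf i).mp (by omega)
  refine ⟨q, funext fun i => ?_⟩
  rcases eq_or_ne i q with rfl | hi
  · simp [hfq]
  · simp [hi, hrest0 i (by simp [hi])]

lemma GaussianInt.exists_toComplex_eq_I_pow_of_norm_eq_one {x : GaussianInt} (hx : x.norm = 1) :
    ∃ m : ℕ, (x : ℂ) = I ^ m := by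
  obtain ⟨a, b⟩ := x
  have hab : a * a + b * b = 1 := by simpa [Zsqrtd.norm_def] using hx
  have ha1 : -1 ≤ a := by nlinarith [mul_self_nonneg b]
  have ha2 : a ≤ 1 := by nlinarith [mul_self_nonneg b]
  have hb1 : -1 ≤ b := by nlinarith [mul_self_nonneg a]
  have hb2 : b ≤ 1 := by nlinarith [mul_self_nonneg a]
  rw [GaussianInt.toComplex_def']
  interval_cases a <;> interval_cases b <;> simp at hab
  · exact ⟨2, by simp [pow_two]⟩
  · exact ⟨3, by simp [pow_succ]⟩
  · exact ⟨1, by simp⟩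
  · exact ⟨0, by simp⟩

lemma exists_eq_single_I_pow {n : ℕ} {v : Fin n → ℂ} (hv : ∀ j, v j ∈ Zi)
    (hunit : ∑ j, (starRingEnd ℂ) (v j) * v j = 1) :
    ∃ q, ∃ m : ℕ, v = Pi.single q (I ^ m) := by
  choose w hw using fun j => Zi_le_range_toComplex (hv j)
  have hnorm : ∑ j, (w j).norm = 1 := by
    have : ∑ j, ((w j).norm : ℂ) = 1 := by
      simpa [GaussianInt.intCast_complex_norm, Complex.normSq_eq_conj_mul_self, hw] using hunit
    exact_mod_cast this
  obtain ⟨q, hq⟩ :=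
    Int.exists_eq_single_of_sum_eq_one (fun j => GaussianInt.norm_nonneg _) hnorm
  obtain ⟨m, hm⟩ :=
    GaussianInt.exists_toComplex_eq_I_pow_of_norm_eq_one (by simpa using congrFun hq q)
  refine ⟨q, m, funext fun j => ?_⟩
  rcases eq_or_ne j q with rfl | hj
  · simp [← hw, hm]
  · have : w j = 0 := GaussianInt.norm_eq_zero.mp (by simp [congrFun hq j, hj])
    simp [← hw, this, hj]

lemma oneLevel_eq_diagonal (n : ℕ) (z : ℂ) (j : Fin n) :
    oneLevel n z j = diagonal (Function.update 1 j z) := by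
  ext a b
  rcases eq_or_ne a b with rfl | hab
  · by_cases h : a = j <;> simp [oneLevel, h]
  · have : ¬(a = j ∧ b = j) := fun h => hab (h.1.trans h.2.symm)
    simp [oneLevel, hab, this]

lemma oneLevel_pow_mulVec_single (n : ℕ) (z c : ℂ) (j : Fin n) (m : ℕ) :
    oneLevel n z j ^ m *ᵥ Pi.single j c = Pi.single j (z ^ m * c) := by
  rw [oneLevel_eq_diagonal, diagonal_pow, diagonal_mulVec_single]
  simp

lemma twoLevel_Xmat_eq_swap (n : ℕ) {j k : Fin n} (hjk : j ≠ k) :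
    twoLevel n Xmat j k = swap ℂ j k := by
  ext a b
  simp only [twoLevel, Xmat, swap, PEquiv.toMatrix_apply, Equiv.toPEquiv_apply, Option.mem_def,
    Option.some.injEq, Equiv.swap_apply_def]
  split_ifs <;> subst_vars <;> simp_all

def iXGenerators (n : ℕ) : Set (Matrix (Fin n) (Fin n) ℂ) :=
  {M | (∃ j, M = oneLevel n I j) ∨ (∃ j k, j < k ∧ M = twoLevel n Xmat j k)}

lemma oneLevel_I_mem_closure_iXGenerators {n : ℕ} (j : Fin n) :
    oneLevel n I j ∈ Submonoid.closure (iXGenerators n) :=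
  Submonoid.subset_closure (Or.inl ⟨j, rfl⟩)

lemma swap_mem_closure_iXGenerators {n : ℕ} (j k : Fin n) :
    swap ℂ j k ∈ Submonoid.closure (iXGenerators n) := by
  rcases lt_trichotomy j k with h | rfl | h
  · exact Submonoid.subset_closure (Or.inr ⟨j, k, h, (twoLevel_Xmat_eq_swap n h.ne).symm⟩)
  · simp [swap]
  · rw [swap_comm]
    exact Submonoid.subset_closure (Or.inr ⟨k, j, h, (twoLevel_Xmat_eq_swap n h.ne).symm⟩)

/-- For a unit vector v ∈ ℤ[i]^n and p, there is a product G of one-level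
matrices of type i and two-level matrices of type X with G·v = e_p. -/
theorem stmt_4 (n : ℕ) (v : Fin n → ℂ) (hv : ∀ j, v j ∈ Zi)
    (hunit : ∑ j, (starRingEnd ℂ) (v j) * v j = 1) (p : Fin n) :
    ∃ G ∈ Submonoid.closure {M : Matrix (Fin n) (Fin n) ℂ |
        (∃ j, M = oneLevel n Complex.I j) ∨
        (∃ j k, j < k ∧ M = twoLevel n Xmat j k)},
      G.mulVec v = Pi.single p 1 := by
  obtain ⟨q, m, rfl⟩ := exists_eq_single_I_pow hv hunit
  have hI : I ^ (3 * m) * I ^ m = 1 := by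
    rw [← pow_add, show 3 * m + m = 4 * m by ring, pow_mul, I_pow_four, one_pow]
  refine ⟨swap ℂ p q * oneLevel n I q ^ (3 * m),
    mul_mem (swap_mem_closure_iXGenerators p q)
      (pow_mem (oneLevel_I_mem_closure_iXGenerators q) _), ?_⟩
  rw [← mulVec_mulVec, oneLevel_pow_mulVec_single, hI, swap_mulVec, Pi.single_comp_equiv,
    Equiv.symm_swap, Equiv.swap_apply_right]

end
end

section
/- Let v ∈ ℂ^n be a unit vector (v†v = 1) all of whose entries lie in ℤ[1/2,i], let k > 0 be the least denominator exponent of v, and let w = γ^k·v ∈ ℤ[i]^n. Then the number of indices j ∈ {0,…,n−1} such that w_j is odd is even. -/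
/-! Put `w_j = γ^k v_j ∈ ℤ[i]`. Since `|γ|² = 2`, unitarity of `v` gives `∑ N(w_j) = 2^k`, which
is even because `k > 0`. A Gaussian integer `a + bi` is divisible by `γ` iff `a + b` is even, iff
its norm `a² + b²` is even; so the odd `w_j` are exactly those of odd norm, and there is an even
number of them. -/

open Matrix

noncomputable section

open ComplexConjugate

lemma Zi_eq_range : Zi = GaussianInt.toComplex.range := by
  apply le_antisymm
  · rw [Zi, Subring.closure_le, Set.singleton_subset_iff]
    exact ⟨⟨0, 1⟩, by simp [GaussianInt.toComplex_def']⟩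
  · rintro _ ⟨z, rfl⟩
    rw [GaussianInt.toComplex_def]
    exact add_mem (intCast_mem _ _) (mul_mem (intCast_mem _ _) (Subring.subset_closure rfl))

namespace GaussianInt

lemma toComplex_one_add_I : ((⟨1, 1⟩ : GaussianInt) : ℂ) = 1 + Complex.I := by
  simp [toComplex_def']

lemma even_norm_iff (z : GaussianInt) : Even z.norm ↔ Even (z.re + z.im) := by
  simp [Zsqrtd.norm_def, Int.even_add, Int.even_mul]

lemma one_add_I_dvd_iff_even_norm (z : GaussianInt) : ⟨1, 1⟩ ∣ z ↔ Even z.norm := by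
  rw [even_norm_iff]
  constructor
  · rintro ⟨y, rfl⟩
    exact ⟨y.re, by simp only [Zsqrtd.re_mul, Zsqrtd.im_mul]; ring⟩
  · rintro ⟨c, hc⟩
    -- `(1 + i)(a + bi) = (a - b) + (a + b)i`, solved with `a = c`, `2c = re z + im z`
    exact ⟨⟨c, c - z.re⟩, by ext <;> simp only [Zsqrtd.re_mul, Zsqrtd.im_mul] <;> omega⟩

lemma exists_mem_Zi_eq_one_add_I_mul_iff (z : GaussianInt) :
    (∃ y ∈ Zi, (z : ℂ) = (1 + Complex.I) * y) ↔ ⟨1, 1⟩ ∣ z := by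
  simp only [Zi_eq_range, RingHom.mem_range, exists_exists_eq_and, ← toComplex_one_add_I,
    ← toComplex_mul, toComplex_inj]
  rfl

lemma sum_natAbs_norm_eq_two_pow {ι : Type*} [Fintype ι] (v : ι → ℂ)
    (hunit : ∑ j, conj (v j) * v j = 1) (k : ℕ) (W : ι → GaussianInt)
    (hW : ∀ j, (W j : ℂ) = (1 + Complex.I) ^ k * v j) :
    ∑ j, (W j).norm.natAbs = 2 ^ k := by
  have hnormSq : Complex.normSq (1 + Complex.I) = 2 := by
    norm_num [Complex.normSq_apply]
  have hnorm (j : ι) : ((W j).norm.natAbs : ℂ) = 2 ^ k * (conj (v j) * v j) := by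
    rw [natCast_natAbs_norm, intCast_complex_norm, hW, Complex.normSq_mul, map_pow, hnormSq]
    push_cast [Complex.normSq_eq_conj_mul_self]
    rfl
  exact_mod_cast (show ((∑ j, (W j).norm.natAbs : ℕ) : ℂ) = 2 ^ k by
    push_cast
    simp only [hnorm, ← Finset.mul_sum, hunit, mul_one])

end GaussianInt

open scoped Classical in
theorem stmt_5_general (n : ℕ) (v : Fin n → ℂ)
    (hunit : ∑ j, (starRingEnd ℂ) (v j) * v j = 1) (k : ℕ) (hk : 0 < k)
    (hlde : sInf {m : ℕ | ∀ j, (1 + Complex.I) ^ m * v j ∈ Zi} = k) :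
    Even (Finset.univ.filter (fun j : Fin n =>
        ¬ ∃ y ∈ Zi, (1 + Complex.I) ^ k * v j = (1 + Complex.I) * y)).card := by
  have hmem : ∀ j, (1 + Complex.I) ^ k * v j ∈ Zi := by
    rw [← hlde]
    exact Nat.sInf_mem (Nat.nonempty_of_pos_sInf (hlde ▸ hk))
  simp only [Zi_eq_range, RingHom.mem_range] at hmem
  choose W hW using hmem
  have hsum := GaussianInt.sum_natAbs_norm_eq_two_pow v hunit k W hW
  have heven : Even (∑ j, (W j).norm.natAbs) := hsum ▸ (Nat.even_pow.mpr ⟨even_two, hk.ne'⟩)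
  rw [Finset.even_sum_iff_even_card_odd] at heven
  convert heven using 3 with j
  rw [← hW, GaussianInt.exists_mem_Zi_eq_one_add_I_mul_iff,
    GaussianInt.one_add_I_dvd_iff_even_norm, ← Int.natAbs_even, Nat.not_even_iff_odd]

open scoped Classical in
/-- If v is a unit vector with entries in ℤ[1/2,i] and least denominator
exponent k > 0, then w = γ^k·v has an even number of odd entries. -/
theorem stmt_5 (n : ℕ) (v : Fin n → ℂ) (hv : ∀ j, v j ∈ Dhi)
    (hunit : ∑ j, (starRingEnd ℂ) (v j) * v j = 1) (k : ℕ) (hk : 0 < k)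
    (hlde : sInf {m : ℕ | ∀ j, (1 + Complex.I) ^ m * v j ∈ Zi} = k) :
    Even (Finset.univ.filter (fun j : Fin n =>
        ¬ ∃ y ∈ Zi, (1 + Complex.I) ^ k * v j = (1 + Complex.I) * y)).card :=
  stmt_5_general n v hunit k hk hlde

end
end

section
/- Let v be a unit vector in ℂ^n (v†v = 1) all of whose entries lie in ℤ[1/2,i], and let p ∈ {0,…,n−1}. Then there exists an n×n matrix G that is a product of one- and two-level matrices of types X, K†, and i, such that G·v = e_p, where e_p is the p-th standard basis vector. -/
/-!
Write `γ = 1 + i`. Some power `γ ^ k` clears the denominators of `v`, and we descend on `k`.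
If `γ ^ k v` is integral, then `|γ ^ k v|² = 2 ^ k` forces an even number of its entries to be
odd (not divisible by `γ`). Two odd entries, after multiplying one of them by a suitable power
of `i`, are congruent modulo 2, so `K†` turns them into entries divisible by `γ`; repeating this
makes `γ ^ (k - 1) v` integral. At `k = 0`, `v` is a unit vector over `ℤ[i]`, that is, a power
of `i` times a standard basis vector, which the gates `i` and `X` move to `e_p`.
-/

open Matrix

noncomputable section

open ComplexConjugate Complex Function Finset

local notation "γ" => (1 + Complex.I)

lemma I_mem_Zi : I ∈ Zi := Subring.subset_closure rfl

lemma gamma_mem_Zi : γ ∈ Zi := add_mem (one_mem _) I_mem_Zi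

lemma gamma_ne_zero : γ ≠ 0 := fun h => by simpa using congrArg im h

lemma conj_gamma_mul_gamma : conj γ * γ = 2 := by
  rw [map_add, map_one, conj_I]
  linear_combination -I_sq

lemma intCast_add_mul_I_mem_Zi (a b : ℤ) : (a : ℂ) + b * I ∈ Zi :=
  add_mem (intCast_mem Zi a) (mul_mem (intCast_mem Zi b) I_mem_Zi)

lemma mem_Zi_iff {z : ℂ} : z ∈ Zi ↔ ∃ a b : ℤ, z = a + b * I := by
  refine ⟨fun hz => ?_, fun ⟨a, b, hz⟩ => hz ▸ intCast_add_mul_I_mem_Zi a b⟩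
  induction hz using Subring.closure_induction with
  | mem x hx => exact ⟨0, 1, by simp [Set.mem_singleton_iff.mp hx]⟩
  | zero => exact ⟨0, 0, by simp⟩
  | one => exact ⟨1, 0, by simp⟩
  | add x y _ _ hx hy =>
    obtain ⟨a, b, rfl⟩ := hx
    obtain ⟨c, d, rfl⟩ := hy
    exact ⟨a + c, b + d, by push_cast; ring⟩
  | neg x _ hx =>
    obtain ⟨a, b, rfl⟩ := hx
    exact ⟨-a, -b, by push_cast; ring⟩
  | mul x y _ _ hx hy =>
    obtain ⟨a, b, rfl⟩ := hx
    obtain ⟨c, d, rfl⟩ := hy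
    exact ⟨a * c - b * d, a * d + b * c, by push_cast; linear_combination (b * d : ℂ) * I_sq⟩

lemma intCast_add_mul_I_inj {a b c d : ℤ} (h : (a : ℂ) + b * I = c + d * I) :
    a = c ∧ b = d := by
  simpa [Complex.ext_iff] using h

lemma conj_mul_self_intCast_add_mul_I (a b : ℤ) :
    conj ((a : ℂ) + b * I) * (a + b * I) = ((a.natAbs ^ 2 + b.natAbs ^ 2 : ℕ) : ℂ) := by
  have h : ((a.natAbs ^ 2 + b.natAbs ^ 2 : ℕ) : ℤ) = a ^ 2 + b ^ 2 := by
    push_cast; rw [sq_abs, sq_abs]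
  rw [← Int.cast_natCast, h, map_add, map_mul, conj_I, map_intCast, map_intCast]
  push_cast
  linear_combination (-(b : ℂ) ^ 2) * I_sq

lemma mem_Zi_iff_even_of_gamma_mul {z : ℂ} {a b : ℤ} (h : γ * z = a + b * I) :
    z ∈ Zi ↔ Even (a + b) := by
  constructor
  · intro hz
    obtain ⟨c, d, rfl⟩ := mem_Zi_iff.mp hz
    have : (a : ℂ) + b * I = ((c - d : ℤ) : ℂ) + ((c + d : ℤ) : ℂ) * I := by
      rw [← h]; push_cast; linear_combination (d : ℂ) * I_sq
    obtain ⟨rfl, rfl⟩ := intCast_add_mul_I_inj this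
    exact ⟨c, by ring⟩
  · rintro ⟨e, he⟩
    have hz : z = e + ((b - e : ℤ) : ℂ) * I := by
      refine mul_left_cancel₀ gamma_ne_zero ?_
      have he' : (a : ℂ) = e + e - b := by exact_mod_cast (eq_sub_of_add_eq he)
      rw [h, he']; push_cast; linear_combination ((e : ℂ) - b) * I_sq
    exact hz ▸ intCast_add_mul_I_mem_Zi _ _

lemma half_add_sub_mem_Zi {a b c d : ℤ} (hac : Even (a - c)) (hbd : Even (b - d)) :
    ((a : ℂ) + b * I + (c + d * I)) / 2 ∈ Zi ∧ ((a : ℂ) + b * I - (c + d * I)) / 2 ∈ Zi := by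
  obtain ⟨e, he⟩ := hac
  obtain ⟨f, hf⟩ := hbd
  have he' : (a : ℂ) = c + e + e := by exact_mod_cast (by omega : a = c + e + e)
  have hf' : (b : ℂ) = d + f + f := by exact_mod_cast (by omega : b = d + f + f)
  constructor
  · convert intCast_add_mul_I_mem_Zi (c + e) (d + f) using 1
    rw [he', hf']; push_cast; ring
  · convert intCast_add_mul_I_mem_Zi e f using 1
    rw [he', hf']; ring

/-- Odd Gaussian integers are `≡ 1` or `≡ i` modulo 2, so some `i ^ r` makes `γ z` and
`i ^ r γ w` congruent modulo 2. -/
lemma exists_I_pow_Kdag_mem_Zi {z w : ℂ} (hz : γ * z ∈ Zi) (hw : γ * w ∈ Zi)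
    (hz' : z ∉ Zi) (hw' : w ∉ Zi) :
    ∃ r : ℕ, γ / 2 * (z + I ^ r * w) ∈ Zi ∧ γ / 2 * (z - I ^ r * w) ∈ Zi := by
  obtain ⟨a, b, hab⟩ := mem_Zi_iff.mp hz
  obtain ⟨c, d, hcd⟩ := mem_Zi_iff.mp hw
  have hodd_ab := (mem_Zi_iff_even_of_gamma_mul hab).not.mp hz'
  have hodd_cd := (mem_Zi_iff_even_of_gamma_mul hcd).not.mp hw'
  have hK : ∀ r : ℕ, γ / 2 * (z + I ^ r * w) = (γ * z + I ^ r * (γ * w)) / 2 ∧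
      γ / 2 * (z - I ^ r * w) = (γ * z - I ^ r * (γ * w)) / 2 :=
    fun r => ⟨by ring, by ring⟩
  simp only [Int.even_iff] at hodd_ab hodd_cd
  by_cases hac : Even (a - c)
  · refine ⟨0, ?_⟩
    rw [(hK 0).1, (hK 0).2, hab, hcd, pow_zero, one_mul]
    exact half_add_sub_mem_Zi hac (by rw [Int.even_iff] at hac ⊢; omega)
  · refine ⟨1, ?_⟩
    have hIw : I ^ 1 * (γ * w) = ((-d : ℤ) : ℂ) + (c : ℤ) * I := by
      rw [hcd]; push_cast; linear_combination (d : ℂ) * I_sq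
    rw [(hK 1).1, (hK 1).2, hIw, hab]
    rw [Int.even_iff] at hac
    exact half_add_sub_mem_Zi (by rw [Int.even_iff]; omega) (by rw [Int.even_iff]; omega)

lemma gamma_pow_mul_mem_Zi_of_le {k m : ℕ} (hkm : k ≤ m) {z : ℂ} (h : γ ^ k * z ∈ Zi) :
    γ ^ m * z ∈ Zi := by
  have : γ ^ m * z = γ ^ (m - k) * (γ ^ k * z) := by
    rw [← mul_assoc, ← pow_add, Nat.sub_add_cancel hkm]
  exact this ▸ mul_mem (pow_mem gamma_mem_Zi _) h

lemma exists_gamma_pow_mul_mem_Zi {z : ℂ} (hz : z ∈ Dhi) : ∃ k, γ ^ k * z ∈ Zi := by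
  induction hz using Subring.closure_induction with
  | mem x hx =>
    rcases hx with rfl | rfl
    · refine ⟨2, ?_⟩
      have : γ ^ 2 * (1 / 2 : ℂ) = I := by linear_combination I_sq / 2
      rw [this]
      exact I_mem_Zi
    · exact ⟨0, by simpa using I_mem_Zi⟩
  | zero => exact ⟨0, by simp⟩
  | one => exact ⟨0, by simp⟩
  | add x y _ _ hx hy =>
    obtain ⟨k, hk⟩ := hx
    obtain ⟨m, hm⟩ := hy
    refine ⟨max k m, ?_⟩
    rw [mul_add]
    exact add_mem (gamma_pow_mul_mem_Zi_of_le (le_max_left k m) hk)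
      (gamma_pow_mul_mem_Zi_of_le (le_max_right k m) hm)
  | neg x _ hx =>
    obtain ⟨k, hk⟩ := hx
    exact ⟨k, by simpa using neg_mem hk⟩
  | mul x y _ _ hx hy =>
    obtain ⟨k, hk⟩ := hx
    obtain ⟨m, hm⟩ := hy
    refine ⟨k + m, ?_⟩
    have : γ ^ (k + m) * (x * y) = γ ^ k * x * (γ ^ m * y) := by ring
    exact this ▸ mul_mem hk hm

lemma exists_gamma_pow_mul_mem_Zi_of_forall {ι : Type*} [Fintype ι] {v : ι → ℂ}
    (hv : ∀ j, v j ∈ Dhi) : ∃ k, ∀ j, γ ^ k * v j ∈ Zi := by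
  choose k hk using fun j => exists_gamma_pow_mul_mem_Zi (hv j)
  exact ⟨univ.sup k, fun j => gamma_pow_mul_mem_Zi_of_le (le_sup (mem_univ j)) (hk j)⟩

section Gates

variable {n : ℕ}

lemma mulVec_oneLevel (z : ℂ) (j : Fin n) (v : Fin n → ℂ) :
    oneLevel n z j *ᵥ v = update v j (z * v j) := by
  funext a
  rw [mulVec, dotProduct, sum_eq_single a
    (fun b _ hb => by simp only [oneLevel]; split_ifs <;> simp_all) (by simp)]
  rcases eq_or_ne a j with rfl | h
  · simp [oneLevel]
  · simp [oneLevel, h]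

lemma mulVec_twoLevel (U : Matrix (Fin 2) (Fin 2) ℂ) {j k : Fin n} (hjk : j ≠ k)
    (v : Fin n → ℂ) :
    twoLevel n U j k *ᵥ v =
      update (update v j (U 0 0 * v j + U 0 1 * v k)) k (U 1 0 * v j + U 1 1 * v k) := by
  funext a
  simp only [mulVec, dotProduct, twoLevel, update_apply]
  rcases eq_or_ne a j with rfl | haj
  · rw [sum_eq_add_of_mem a k (mem_univ _) (mem_univ _) hjk
      (fun c _ hc => by simp [hc.1, hc.2])]
    simp [hjk, Ne.symm hjk]
  rcases eq_or_ne a k with rfl | hak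
  · rw [sum_eq_add_of_mem j a (mem_univ _) (mem_univ _) hjk
      (fun c _ hc => by simp [hc.1, hc.2, haj])]
    simp [haj]
  · rw [sum_eq_single a (fun b _ hb => by simp [haj, hak, Ne.symm hb]) (by simp)]
    simp [haj, hak]

lemma mulVec_twoLevel_Xmat {j k : Fin n} (hjk : j ≠ k) (v : Fin n → ℂ) :
    twoLevel n Xmat j k *ᵥ v = v ∘ Equiv.swap j k := by
  rw [mulVec_twoLevel _ hjk]
  funext a
  simp only [Xmat, of_apply, cons_val', cons_val_zero, cons_val_one, empty_val',
    cons_val_fin_one, zero_mul, one_mul, zero_add, add_zero,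
    update_apply, Function.comp_apply, Equiv.swap_apply_def]
  split_ifs <;> simp_all

lemma Kdag_eq : Kdag = !![γ / 2, γ / 2; γ / 2, -(γ / 2)] := by
  have hinv : (1 + -I)⁻¹ = γ / 2 := by
    refine inv_eq_of_mul_eq_one_right ?_
    linear_combination -I_sq / 2
  ext i j
  fin_cases i <;> fin_cases j <;> simp [Kdag, Kmat, conjTranspose_apply, hinv]

lemma mulVec_twoLevel_Kdag {j k : Fin n} (hjk : j ≠ k) (v : Fin n → ℂ) :
    twoLevel n Kdag j k *ᵥ v =
      update (update v j (γ / 2 * (v j + v k))) k (γ / 2 * (v j - v k)) := by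
  rw [mulVec_twoLevel _ hjk, Kdag_eq]
  simp only [of_apply, cons_val', cons_val_zero, cons_val_one, empty_val',
    cons_val_fin_one]
  congr 2 <;> ring

end Gates

def gates (n : ℕ) : Set (Matrix (Fin n) (Fin n) ℂ) :=
  {M | (∃ j, M = oneLevel n I j) ∨ (∃ j k, j < k ∧ M = twoLevel n Xmat j k) ∨
    (∃ j k, j < k ∧ M = twoLevel n Kdag j k)}

section Reaches

variable {n : ℕ}

def Reaches (v w : Fin n → ℂ) : Prop :=
  ∃ G ∈ Submonoid.closure (gates n), G *ᵥ v = w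

lemma Reaches.refl (v : Fin n → ℂ) : Reaches v v := ⟨1, one_mem _, one_mulVec v⟩

lemma Reaches.trans {u v w : Fin n → ℂ} : Reaches u v → Reaches v w → Reaches u w
  | ⟨G, hG, hGu⟩, ⟨H, hH, hHv⟩ => ⟨H * G, mul_mem hH hG, by rw [← mulVec_mulVec, hGu, hHv]⟩

lemma reaches_mulVec_of_mem_gates {M : Matrix (Fin n) (Fin n) ℂ} (hM : M ∈ gates n)
    (v : Fin n → ℂ) : Reaches v (M *ᵥ v) :=
  ⟨M, Submonoid.subset_closure hM, rfl⟩

lemma reaches_update_I_pow_mul (v : Fin n → ℂ) (j : Fin n) (r : ℕ) :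
    Reaches v (update v j (I ^ r * v j)) := by
  induction r with
  | zero => simpa using Reaches.refl v
  | succ r ih =>
    refine ih.trans ?_
    convert reaches_mulVec_of_mem_gates (Or.inl ⟨j, rfl⟩) _ using 1
    rw [mulVec_oneLevel, update_idem, update_self, pow_succ', mul_assoc]

lemma reaches_comp_swap {j k : Fin n} (hjk : j ≠ k) (v : Fin n → ℂ) :
    Reaches v (v ∘ Equiv.swap j k) := by
  rcases hjk.lt_or_gt with h | h
  · exact (mulVec_twoLevel_Xmat h.ne v) ▸
      reaches_mulVec_of_mem_gates (Or.inr (Or.inl ⟨j, k, h, rfl⟩)) v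
  · rw [Equiv.swap_comm]
    exact (mulVec_twoLevel_Xmat h.ne v) ▸
      reaches_mulVec_of_mem_gates (Or.inr (Or.inl ⟨k, j, h, rfl⟩)) v

lemma reaches_single_single (c : ℂ) (j k : Fin n) :
    Reaches (Pi.single j c) (Pi.single k c) := by
  rcases eq_or_ne j k with rfl | hjk
  · exact Reaches.refl _
  convert reaches_comp_swap hjk (Pi.single j c) using 1
  funext i
  simp only [Function.comp_apply, Pi.single_apply, Equiv.swap_apply_def]
  split_ifs <;> simp_all

lemma reaches_single_I_pow_mul (c : ℂ) (j : Fin n) (r : ℕ) :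
    Reaches (Pi.single j c) (Pi.single j (I ^ r * c)) := by
  simpa [Pi.single, update_idem] using reaches_update_I_pow_mul (Pi.single j c) j r

end Reaches

section SqNorm

variable {ι : Type*} [Fintype ι]

def sqNorm (v : ι → ℂ) : ℂ := ∑ j, conj (v j) * v j

lemma sqNorm_update [DecidableEq ι] (v : ι → ℂ) (j : ι) (a : ℂ) :
    sqNorm (update v j a) = sqNorm v - conj (v j) * v j + conj a * a := by
  unfold sqNorm
  rw [← add_sum_erase _ _ (mem_univ j), ← add_sum_erase _ _ (mem_univ j),
    sum_congr rfl fun i hi => by rw [update_of_ne (ne_of_mem_erase hi)], update_self]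
  ring

lemma conj_mul_self_I_pow_mul (r : ℕ) (c : ℂ) : conj (I ^ r * c) * (I ^ r * c) = conj c * c := by
  have h : conj I * I = 1 := by rw [conj_I]; linear_combination -I_sq
  calc conj (I ^ r * c) * (I ^ r * c) = (conj I * I) ^ r * (conj c * c) := by
        rw [map_mul, map_pow, mul_pow]; ring
    _ = conj c * c := by rw [h, one_pow, one_mul]

lemma sqNorm_update_I_pow_mul [DecidableEq ι] (v : ι → ℂ) (j : ι) (r : ℕ) :
    sqNorm (update v j (I ^ r * v j)) = sqNorm v := by
  rw [sqNorm_update, conj_mul_self_I_pow_mul]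
  ring

lemma sqNorm_gamma_pow_mul (k : ℕ) (v : ι → ℂ) :
    sqNorm (fun j => γ ^ k * v j) = 2 ^ k * sqNorm v := by
  rw [sqNorm, sqNorm, mul_sum]
  refine sum_congr rfl fun j _ => ?_
  rw [map_mul, map_pow, ← conj_gamma_mul_gamma, mul_pow]
  ring

lemma sqNorm_eq_natCast_sum {v : ι → ℂ} {a b : ι → ℤ} (h : ∀ j, v j = a j + b j * I) :
    sqNorm v = ((∑ j, ((a j).natAbs ^ 2 + (b j).natAbs ^ 2) : ℕ) : ℂ) := by
  rw [sqNorm, Nat.cast_sum]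
  exact sum_congr rfl fun j _ => by rw [h j, conj_mul_self_intCast_add_mul_I]

end SqNorm

lemma conj_mul_self_Kdag_pair (s t : ℂ) :
    conj (γ / 2 * (s + t)) * (γ / 2 * (s + t)) + conj (γ / 2 * (s - t)) * (γ / 2 * (s - t)) =
      conj s * s + conj t * t := by
  simp only [map_mul, map_add _ s t, map_sub, map_div₀, map_ofNat]
  linear_combination (conj s * s + conj t * t) / 2 * conj_gamma_mul_gamma

lemma sqNorm_mulVec_twoLevel_Kdag {n : ℕ} {j k : Fin n} (hjk : j ≠ k) (v : Fin n → ℂ) :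
    sqNorm (twoLevel n Kdag j k *ᵥ v) = sqNorm v := by
  rw [mulVec_twoLevel_Kdag hjk, sqNorm_update, sqNorm_update, update_of_ne hjk.symm]
  linear_combination conj_mul_self_Kdag_pair (v j) (v k)

lemma exists_eq_one_of_sum_eq_one {ι : Type*} [Fintype ι] {f : ι → ℕ} (h : ∑ i, f i = 1) :
    ∃ j, f j = 1 ∧ ∀ i ≠ j, f i = 0 := by
  classical
  obtain ⟨j, -, hj⟩ := exists_ne_zero_of_sum_ne_zero (h ▸ one_ne_zero)
  have hsplit := add_sum_erase univ f (mem_univ j)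
  rw [h] at hsplit
  have hrest : ∑ i ∈ univ.erase j, f i = 0 := by omega
  refine ⟨j, by omega, fun i hi => ?_⟩
  exact sum_eq_zero_iff.mp hrest i (mem_erase.mpr ⟨hi, mem_univ i⟩)

lemma exists_I_pow_mul_eq_one {a b : ℤ} (h : a.natAbs ^ 2 + b.natAbs ^ 2 = 1) :
    ∃ m : ℕ, I ^ m * (a + b * I) = 1 := by
  have hsq : a ^ 2 + b ^ 2 = 1 := by
    rw [← Int.natAbs_sq a, ← Int.natAbs_sq b]; exact_mod_cast h
  have ha : -1 ≤ a ∧ a ≤ 1 := by constructor <;> nlinarith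
  have hb : -1 ≤ b ∧ b ≤ 1 := by constructor <;> nlinarith
  obtain ⟨ha₁, ha₂⟩ := ha
  obtain ⟨hb₁, hb₂⟩ := hb
  interval_cases a <;> interval_cases b <;> norm_num at hsq
  · exact ⟨2, by norm_num⟩
  · exact ⟨1, by norm_num⟩
  · exact ⟨3, by norm_num [pow_succ]⟩
  · exact ⟨0, by norm_num⟩

lemma exists_eq_single_of_forall_mem_Zi {ι : Type*} [Fintype ι] [DecidableEq ι] {v : ι → ℂ}
    (hv : ∀ j, v j ∈ Zi) (hnorm : sqNorm v = 1) :
    ∃ j, ∃ m : ℕ, I ^ m * v j = 1 ∧ v = Pi.single j (v j) := by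
  choose a b hab using fun j => mem_Zi_iff.mp (hv j)
  have hsum : ∑ j, ((a j).natAbs ^ 2 + (b j).natAbs ^ 2) = 1 := by
    exact_mod_cast (sqNorm_eq_natCast_sum hab).symm.trans hnorm
  obtain ⟨j, hj, hzero⟩ := exists_eq_one_of_sum_eq_one hsum
  obtain ⟨m, hm⟩ := exists_I_pow_mul_eq_one hj
  refine ⟨j, m, hab j ▸ hm, funext fun i => ?_⟩
  rcases eq_or_ne i j with rfl | hi
  · simp
  · have := hzero i hi
    simp_all

lemma reaches_single_of_forall_mem_Zi {n : ℕ} {v : Fin n → ℂ} (hv : ∀ j, v j ∈ Zi)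
    (hnorm : sqNorm v = 1) (p : Fin n) : Reaches v (Pi.single p 1) := by
  obtain ⟨j, m, hm, hvj⟩ := exists_eq_single_of_forall_mem_Zi hv hnorm
  have h := (reaches_single_I_pow_mul (v j) j m).trans (reaches_single_single _ j p)
  rwa [hm, ← hvj] at h

section Descent

variable {ι : Type*} [Fintype ι]

open Classical in
/-- When `γ ^ (k + 1) • v` is integral, these are the indices `j` where the Gaussian integer
`γ ^ (k + 1) * v j` is odd, i.e. not divisible by `γ`. -/
def oddEntries (k : ℕ) (v : ι → ℂ) : Finset ι := {j | γ ^ k * v j ∉ Zi}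

lemma mem_oddEntries {k : ℕ} {v : ι → ℂ} {j : ι} : j ∈ oddEntries k v ↔ γ ^ k * v j ∉ Zi := by
  simp [oddEntries]

lemma odd_natAbs_sq_add_natAbs_sq_iff (a b : ℤ) :
    Odd (a.natAbs ^ 2 + b.natAbs ^ 2) ↔ ¬Even (a + b) := by
  rw [← Int.odd_coe_nat]
  push_cast [Int.natAbs_sq]
  simp [parity_simps, ← Int.not_even_iff_odd]

/-- `|γ ^ (k + 1) v|² = 2 ^ (k + 1)` is even, and `|a + b i|² ≡ a + b` modulo 2. -/
lemma even_card_oddEntries {k : ℕ} {v : ι → ℂ} (hv : ∀ j, γ ^ (k + 1) * v j ∈ Zi)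
    (hnorm : sqNorm v = 1) : Even (oddEntries k v).card := by
  choose a b hab using fun j => mem_Zi_iff.mp (hv j)
  have hsum : ∑ j, ((a j).natAbs ^ 2 + (b j).natAbs ^ 2) = 2 ^ (k + 1) := by
    have h := sqNorm_eq_natCast_sum (v := fun j => γ ^ (k + 1) * v j) hab
    rw [sqNorm_gamma_pow_mul, hnorm, mul_one] at h
    exact_mod_cast h.symm
  have hodd :
      oddEntries k v = ({j | Odd ((a j).natAbs ^ 2 + (b j).natAbs ^ 2)} : Finset ι) := by
    ext j
    have hj : γ * (γ ^ k * v j) = a j + b j * I := by rw [← hab j]; ring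
    rw [mem_oddEntries, mem_Zi_iff_even_of_gamma_mul hj, mem_filter,
      odd_natAbs_sq_add_natAbs_sq_iff]
    simp
  rw [hodd, ← even_sum_iff_even_card_odd, hsum]
  exact Nat.even_pow.mpr ⟨even_two, k.succ_ne_zero⟩

lemma card_oddEntries_lt {k : ℕ} {v w : ι → ℂ} {x y : ι} (hx : x ∈ oddEntries k v)
    (hwx : γ ^ k * w x ∈ Zi) (hwy : γ ^ k * w y ∈ Zi)
    (hvw : ∀ j, j ≠ x → j ≠ y → w j = v j) :
    (oddEntries k w).card < (oddEntries k v).card := by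
  classical
  refine (card_le_card fun j hj => ?_).trans_lt (card_erase_lt_of_mem hx)
  rw [mem_oddEntries] at hj
  have hjx : j ≠ x := by rintro rfl; exact hj hwx
  have hjy : j ≠ y := by rintro rfl; exact hj hwy
  exact mem_erase.mpr ⟨hjx, mem_oddEntries.mpr (hvw j hjx hjy ▸ hj)⟩

end Descent

lemma exists_reaches_card_oddEntries_lt {n k : ℕ} {v : Fin n → ℂ}
    (hv : ∀ j, γ ^ (k + 1) * v j ∈ Zi) (hnorm : sqNorm v = 1)
    (hcard : 1 < (oddEntries k v).card) :
    ∃ w, Reaches v w ∧ (∀ j, γ ^ (k + 1) * w j ∈ Zi) ∧ sqNorm w = 1 ∧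
      (oddEntries k w).card < (oddEntries k v).card := by
  obtain ⟨x, hx, y, hy, hxy⟩ : ∃ x ∈ oddEntries k v, ∃ y ∈ oddEntries k v, x < y :=
    ⟨_, min'_mem _ _, _, max'_mem _ _, min'_lt_max'_of_card _ hcard⟩
  have hγv : ∀ j, γ * (γ ^ k * v j) ∈ Zi := fun j => by rw [← mul_assoc, ← pow_succ']; exact hv j
  obtain ⟨r, hplus, hminus⟩ := exists_I_pow_Kdag_mem_Zi (hγv x) (hγv y)
    (mem_oddEntries.mp hx) (mem_oddEntries.mp hy)
  have hw := mulVec_twoLevel_Kdag hxy.ne (update v y (I ^ r * v y))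
  simp only [update_self, update_of_ne hxy.ne] at hw
  set w := twoLevel n Kdag x y *ᵥ update v y (I ^ r * v y)
  have hwx : γ ^ k * w x = γ / 2 * (γ ^ k * v x + I ^ r * (γ ^ k * v y)) := by
    rw [hw, update_of_ne hxy.ne, update_self]; ring
  have hwy : γ ^ k * w y = γ / 2 * (γ ^ k * v x - I ^ r * (γ ^ k * v y)) := by
    rw [hw, update_self]; ring
  have hwj : ∀ j, j ≠ x → j ≠ y → w j = v j := fun j hjx hjy => by
    rw [hw, update_of_ne hjy, update_of_ne hjx, update_of_ne hjy]
  refine ⟨w, (reaches_update_I_pow_mul v y r).trans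
    (reaches_mulVec_of_mem_gates (Or.inr (Or.inr ⟨x, y, hxy, rfl⟩)) _), fun j => ?_, ?_,
    card_oddEntries_lt hx (hwx ▸ hplus) (hwy ▸ hminus) hwj⟩
  · rcases eq_or_ne j x with rfl | hjx
    · exact gamma_pow_mul_mem_Zi_of_le k.le_succ (hwx ▸ hplus)
    rcases eq_or_ne j y with rfl | hjy
    · exact gamma_pow_mul_mem_Zi_of_le k.le_succ (hwy ▸ hminus)
    · exact hwj j hjx hjy ▸ hv j
  · rw [sqNorm_mulVec_twoLevel_Kdag hxy.ne, sqNorm_update_I_pow_mul, hnorm]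

lemma reaches_single_of_gamma_pow_mul_mem_Zi {n : ℕ} (k : ℕ) {v : Fin n → ℂ}
    (hv : ∀ j, γ ^ k * v j ∈ Zi) (hnorm : sqNorm v = 1) (p : Fin n) :
    Reaches v (Pi.single p 1) := by
  induction k generalizing v with
  | zero => exact reaches_single_of_forall_mem_Zi (by simpa using hv) hnorm p
  | succ k ih =>
    induction hm : (oddEntries k v).card using Nat.strong_induction_on generalizing v with
    | _ m ihm =>
      obtain h0 | hne := (oddEntries k v).eq_empty_or_nonempty
      · refine ih (fun j => ?_) hnorm
        by_contra hj
        exact (eq_empty_iff_forall_notMem.mp h0) j (mem_oddEntries.mpr hj)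
      · have hcard : 1 < (oddEntries k v).card := by
          obtain ⟨c, hc⟩ := even_card_oddEntries hv hnorm
          have := hne.card_pos
          omega
        obtain ⟨w, hvw, hw, hwnorm, hlt⟩ := exists_reaches_card_oddEntries_lt hv hnorm hcard
        exact hvw.trans (ihm _ (hm ▸ hlt) hw hwnorm rfl)

/-- Column lemma: for a unit vector v with entries in ℤ[1/2,i] and any p,
there is a product G of one- and two-level matrices of types X, K†, and i with
G·v = e_p. -/
theorem stmt_7 (n : ℕ) (v : Fin n → ℂ) (hv : ∀ j, v j ∈ Dhi)
    (hunit : ∑ j, (starRingEnd ℂ) (v j) * v j = 1) (p : Fin n) :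
    ∃ G ∈ Submonoid.closure {M : Matrix (Fin n) (Fin n) ℂ |
        (∃ j, M = oneLevel n Complex.I j) ∨
        (∃ j k, j < k ∧ M = twoLevel n Xmat j k) ∨
        (∃ j k, j < k ∧ M = twoLevel n Kdag j k)},
      G.mulVec v = Pi.single p 1 := by
  obtain ⟨k, hk⟩ := exists_gamma_pow_mul_mem_Zi_of_forall hv
  exact reaches_single_of_gamma_pow_mul_mem_Zi k hk hunit p

end
end

section
/- Call the generators X_{[j,j+1]} (for 0 ≤ j < n−1), K_{[0,1]}, and i_{[0]} the basic generators. Then every generator g ∈ 𝒢 is ≈_R-equivalent to a word consisting only of basic generators. In particular, the following equivalences hold: i_{[j]} ≈_R X_{[0,j]}·i_{[0]}·X_{[0,j]} for j ≥ 1; K_{[j,ℓ]} ≈_R X_{[0,j]}·K_{[0,ℓ]}·X_{[0,j]} for 0 < j < ℓ; K_{[0,ℓ]} ≈_R X_{[1,ℓ]}·K_{[0,1]}·X_{[1,ℓ]} for ℓ > 1; and X_{[j,ℓ]} ≈_R X_{[j,j+1]}·X_{[j+1,ℓ]}·X_{[j,j+1]} for ℓ > j+1. -/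
open Matrix

noncomputable section

/-- The generators 𝒢 of U_n(ℤ[1/2,i]): `igen j` stands for i_{[j]},
`xgen j k` for X_{[j,k]} and `kgen j k` for K_{[j,k]}. -/
inductive Gen (n : ℕ) : Type
  | igen (j : ℕ) (hj : j < n)
  | xgen (j k : ℕ) (hjk : j < k) (hk : k < n)
  | kgen (j k : ℕ) (hjk : j < k) (hk : k < n)

/-- Interpretation of a generator as a matrix. -/
def interp {n : ℕ} : Gen n → Matrix (Fin n) (Fin n) ℂ
  | .igen j hj => oneLevel n Complex.I ⟨j, hj⟩
  | .xgen j k hjk hk => twoLevel n Xmat ⟨j, hjk.trans hk⟩ ⟨k, hk⟩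
  | .kgen j k hjk hk => twoLevel n Kmat ⟨j, hjk.trans hk⟩ ⟨k, hk⟩

/-- The semantics ⟦w⟧ of a word w ∈ 𝒢*: the product of the interpretations of its
letters (the empty word denoting the identity matrix). -/
def sem {n : ℕ} : FreeMonoid (Gen n) →* Matrix (Fin n) (Fin n) ℂ :=
  FreeMonoid.lift interp

open FreeMonoid in
/-- The relations R of Figure 1. -/
inductive GRel (n : ℕ) : FreeMonoid (Gen n) → FreeMonoid (Gen n) → Prop
  | r1 (j : ℕ) (hj : j < n) :
      GRel n (of (Gen.igen j hj) ^ 4) 1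
  | r2 (j k : ℕ) (hjk : j < k) (hk : k < n) :
      GRel n (of (Gen.xgen j k hjk hk) ^ 2) 1
  | r3 (j k : ℕ) (hjk : j < k) (hk : k < n) :
      GRel n (of (Gen.kgen j k hjk hk) ^ 8) 1
  | r4 (j k : ℕ) (hj : j < n) (hk : k < n) (hne : j ≠ k) :
      GRel n (of (Gen.igen j hj) * of (Gen.igen k hk))
            (of (Gen.igen k hk) * of (Gen.igen j hj))
  | r5 (j k ℓ : ℕ) (hj : j < n) (hkl : k < ℓ) (hl : ℓ < n) (h1 : j ≠ k) (h2 : j ≠ ℓ) :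
      GRel n (of (Gen.igen j hj) * of (Gen.xgen k ℓ hkl hl))
            (of (Gen.xgen k ℓ hkl hl) * of (Gen.igen j hj))
  | r6 (j k ℓ : ℕ) (hj : j < n) (hkl : k < ℓ) (hl : ℓ < n) (h1 : j ≠ k) (h2 : j ≠ ℓ) :
      GRel n (of (Gen.igen j hj) * of (Gen.kgen k ℓ hkl hl))
            (of (Gen.kgen k ℓ hkl hl) * of (Gen.igen j hj))
  | r7 (j k ℓ m : ℕ) (hjk : j < k) (hk : k < n) (hlm : ℓ < m) (hm : m < n)
      (h1 : j ≠ ℓ) (h2 : j ≠ m) (h3 : k ≠ ℓ) (h4 : k ≠ m) :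
      GRel n (of (Gen.xgen j k hjk hk) * of (Gen.xgen ℓ m hlm hm))
            (of (Gen.xgen ℓ m hlm hm) * of (Gen.xgen j k hjk hk))
  | r8 (j k ℓ m : ℕ) (hjk : j < k) (hk : k < n) (hlm : ℓ < m) (hm : m < n)
      (h1 : j ≠ ℓ) (h2 : j ≠ m) (h3 : k ≠ ℓ) (h4 : k ≠ m) :
      GRel n (of (Gen.xgen j k hjk hk) * of (Gen.kgen ℓ m hlm hm))
            (of (Gen.kgen ℓ m hlm hm) * of (Gen.xgen j k hjk hk))
  | r9 (j k ℓ m : ℕ) (hjk : j < k) (hk : k < n) (hlm : ℓ < m) (hm : m < n)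
      (h1 : j ≠ ℓ) (h2 : j ≠ m) (h3 : k ≠ ℓ) (h4 : k ≠ m) :
      GRel n (of (Gen.kgen j k hjk hk) * of (Gen.kgen ℓ m hlm hm))
            (of (Gen.kgen ℓ m hlm hm) * of (Gen.kgen j k hjk hk))
  | r10 (j k : ℕ) (hjk : j < k) (hk : k < n) :
      GRel n (of (Gen.igen k hk) * of (Gen.xgen j k hjk hk))
            (of (Gen.xgen j k hjk hk) * of (Gen.igen j (hjk.trans hk)))
  | r11 (j k ℓ : ℕ) (hjk : j < k) (hkl : k < ℓ) (hl : ℓ < n) :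
      GRel n (of (Gen.xgen k ℓ hkl hl) * of (Gen.xgen j k hjk (hkl.trans hl)))
            (of (Gen.xgen j k hjk (hkl.trans hl)) * of (Gen.xgen j ℓ (hjk.trans hkl) hl))
  | r11' (j k ℓ : ℕ) (hjk : j < k) (hkl : k < ℓ) (hl : ℓ < n) :
      GRel n (of (Gen.xgen j ℓ (hjk.trans hkl) hl) * of (Gen.xgen k ℓ hkl hl))
            (of (Gen.xgen k ℓ hkl hl) * of (Gen.xgen j k hjk (hkl.trans hl)))
  | r12 (j k ℓ : ℕ) (hjk : j < k) (hkl : k < ℓ) (hl : ℓ < n) :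
      GRel n (of (Gen.kgen k ℓ hkl hl) * of (Gen.xgen j k hjk (hkl.trans hl)))
            (of (Gen.xgen j k hjk (hkl.trans hl)) * of (Gen.kgen j ℓ (hjk.trans hkl) hl))
  | r12' (j k ℓ : ℕ) (hjk : j < k) (hkl : k < ℓ) (hl : ℓ < n) :
      GRel n (of (Gen.kgen j ℓ (hjk.trans hkl) hl) * of (Gen.xgen k ℓ hkl hl))
            (of (Gen.xgen k ℓ hkl hl) * of (Gen.kgen j k hjk (hkl.trans hl)))
  | r13 (j k : ℕ) (hjk : j < k) (hk : k < n) :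
      GRel n (of (Gen.kgen j k hjk hk) * of (Gen.igen k hk) ^ 2)
            (of (Gen.xgen j k hjk hk) * of (Gen.kgen j k hjk hk))
  | r14 (j k : ℕ) (hjk : j < k) (hk : k < n) :
      GRel n (of (Gen.kgen j k hjk hk) * of (Gen.igen k hk) ^ 3)
            (of (Gen.igen k hk) * of (Gen.kgen j k hjk hk) *
             of (Gen.igen k hk) * of (Gen.kgen j k hjk hk))
  | r15 (j k : ℕ) (hjk : j < k) (hk : k < n) :
      GRel n (of (Gen.kgen j k hjk hk) * of (Gen.igen j (hjk.trans hk)) * of (Gen.igen k hk))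
            (of (Gen.igen j (hjk.trans hk)) * of (Gen.igen k hk) * of (Gen.kgen j k hjk hk))
  | r16 (j k : ℕ) (hjk : j < k) (hk : k < n) :
      GRel n (of (Gen.kgen j k hjk hk) ^ 2 * of (Gen.igen j (hjk.trans hk)) * of (Gen.igen k hk)) 1
  | r17 (j k ℓ m : ℕ) (hjk : j < k) (hlm : ℓ < m) (hjl : j < ℓ) (hkm : k < m)
      (hm : m < n) (hkl : k ≠ ℓ) :
      GRel n (of (Gen.kgen j k hjk (hkm.trans hm)) * of (Gen.kgen ℓ m hlm hm) *
             of (Gen.kgen j ℓ hjl (hlm.trans hm)) * of (Gen.kgen k m hkm hm))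
            (of (Gen.kgen j ℓ hjl (hlm.trans hm)) * of (Gen.kgen k m hkm hm) *
             of (Gen.kgen j k hjk (hkm.trans hm)) * of (Gen.kgen ℓ m hlm hm))

/-- A generator is basic if it is X_{[j,j+1]}, K_{[0,1]}, or i_{[0]}. -/
def IsBasic {n : ℕ} : Gen n → Prop
  | .igen j _ => j = 0
  | .xgen j k _ _ => k = j + 1
  | .kgen j k _ _ => j = 0 ∧ k = 1

/-!
Each of the relations (10), (11), (12), (12') has the shape `a·b ≈ b·d` (or `b·a ≈ d·b`) with
`b` an involution `X_{[j,k]}`, hence gives `a ≈ b·d·b`. Conjugating by `X_{[j,j+1]}` shortens the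
gap of `X_{[j,ℓ]}`, conjugating by `X_{[1,ℓ]}` turns `K_{[0,ℓ]}` into `K_{[0,1]}`, and conjugating
by `X_{[0,j]}` moves `i_{[j]}` and `K_{[j,ℓ]}` to index `0`; so every generator lies in the
submonoid of words equivalent to a word of basic generators.
-/

namespace Con

section Conj

variable {M : Type*} [Monoid M] (c : Con M) {a b d : M}

theorem rel_conj_of_mul_rel_mul (hb : c (b * b) 1) (h : c (a * b) (b * d)) :
    c a (b * d * b) := by
  have h1 : c a (a * b * b) := by simpa [mul_assoc] using c.mul (c.refl a) (c.symm hb)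
  exact c.trans h1 (c.mul h (c.refl b))

theorem rel_conj_of_mul_rel_mul' (hb : c (b * b) 1) (h : c (b * a) (d * b)) :
    c a (b * d * b) := by
  have h1 : c a (b * (b * a)) := by simpa [← mul_assoc] using c.mul (c.symm hb) (c.refl a)
  simpa [mul_assoc] using c.trans h1 (c.mul (c.refl b) h)

end Conj

section Expressible

variable {α : Type*} (c : Con (FreeMonoid α)) (P : α → Prop)

def expressible : Submonoid (FreeMonoid α) where
  carrier := {v | ∃ w : FreeMonoid α, (∀ a ∈ w.toList, P a) ∧ c v w}
  one_mem' := ⟨1, by simp, c.refl 1⟩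
  mul_mem' := by
    rintro v v' ⟨w, hw, hvw⟩ ⟨w', hw', hvw'⟩
    refine ⟨w * w', ?_, c.mul hvw hvw'⟩
    simp only [FreeMonoid.toList_mul, List.mem_append]
    rintro a (ha | ha)
    exacts [hw a ha, hw' a ha]

variable {c P}

theorem of_mem_expressible {a : α} (ha : P a) : FreeMonoid.of a ∈ c.expressible P :=
  ⟨FreeMonoid.of a, by simpa using ha, c.refl _⟩

theorem mem_expressible_of_rel {v w : FreeMonoid α} (h : c v w) (hw : w ∈ c.expressible P) :
    v ∈ c.expressible P :=
  let ⟨u, hu, hwu⟩ := hw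
  ⟨u, hu, c.trans h hwu⟩

theorem conj_mem_expressible {v b d : FreeMonoid α} (h : c v (b * d * b))
    (hb : b ∈ c.expressible P) (hd : d ∈ c.expressible P) : v ∈ c.expressible P :=
  mem_expressible_of_rel h (mul_mem (mul_mem hb hd) hb)

end Expressible

end Con

open FreeMonoid

variable {n : ℕ}

theorem xgen_mul_self_rel (j k : ℕ) (hjk : j < k) (hk : k < n) :
    conGen (GRel n) (of (Gen.xgen j k hjk hk) * of (Gen.xgen j k hjk hk)) 1 := by
  simpa [sq] using Con.le_conGen _ _ (GRel.r2 j k hjk hk)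

theorem igen_rel_conj (j : ℕ) (h1 : 1 ≤ j) (hj : j < n) :
    conGen (GRel n) (of (Gen.igen j hj))
      (of (Gen.xgen 0 j h1 hj) * of (Gen.igen 0 (Nat.lt_of_le_of_lt (Nat.zero_le j) hj)) *
       of (Gen.xgen 0 j h1 hj)) :=
  Con.rel_conj_of_mul_rel_mul _ (xgen_mul_self_rel 0 j h1 hj)
    (Con.le_conGen _ _ (GRel.r10 0 j h1 hj))

theorem kgen_rel_conj (j ℓ : ℕ) (h0j : 0 < j) (hjl : j < ℓ) (hl : ℓ < n) :
    conGen (GRel n) (of (Gen.kgen j ℓ hjl hl))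
      (of (Gen.xgen 0 j h0j (hjl.trans hl)) * of (Gen.kgen 0 ℓ (h0j.trans hjl) hl) *
       of (Gen.xgen 0 j h0j (hjl.trans hl))) :=
  Con.rel_conj_of_mul_rel_mul _ (xgen_mul_self_rel 0 j h0j (hjl.trans hl))
    (Con.le_conGen _ _ (GRel.r12 0 j ℓ h0j hjl hl))

theorem kgen_zero_rel_conj (ℓ : ℕ) (h1l : 1 < ℓ) (hl : ℓ < n) :
    conGen (GRel n) (of (Gen.kgen 0 ℓ (Nat.lt_of_lt_of_le Nat.zero_lt_one h1l.le) hl))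
      (of (Gen.xgen 1 ℓ h1l hl) * of (Gen.kgen 0 1 Nat.zero_lt_one (h1l.trans hl)) *
       of (Gen.xgen 1 ℓ h1l hl)) :=
  Con.rel_conj_of_mul_rel_mul _ (xgen_mul_self_rel 1 ℓ h1l hl)
    (Con.le_conGen _ _ (GRel.r12' 0 1 ℓ Nat.zero_lt_one h1l hl))

theorem xgen_rel_conj (j ℓ : ℕ) (hj1l : j + 1 < ℓ) (hl : ℓ < n) :
    conGen (GRel n) (of (Gen.xgen j ℓ ((Nat.lt_succ_self j).trans hj1l) hl))
      (of (Gen.xgen j (j + 1) (Nat.lt_succ_self j) (hj1l.trans hl)) *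
       of (Gen.xgen (j + 1) ℓ hj1l hl) *
       of (Gen.xgen j (j + 1) (Nat.lt_succ_self j) (hj1l.trans hl))) :=
  Con.rel_conj_of_mul_rel_mul' _
    (xgen_mul_self_rel j (j + 1) (Nat.lt_succ_self j) (hj1l.trans hl))
    (Con.le_conGen _ _ (GRel.r11 j (j + 1) ℓ (Nat.lt_succ_self j) hj1l hl)).symm

theorem xgen_mem_expressible (j k : ℕ) (hjk : j < k) (hk : k < n) :
    of (Gen.xgen j k hjk hk) ∈ (conGen (GRel n)).expressible IsBasic := by
  obtain ⟨d, hd⟩ := Nat.exists_eq_add_of_lt hjk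
  induction d generalizing j with
  | zero => exact Con.of_mem_expressible hd
  | succ d ih =>
    have hj1k : j + 1 < k := by omega
    exact Con.conj_mem_expressible (xgen_rel_conj j k hj1k hk) (Con.of_mem_expressible rfl)
      (ih (j + 1) hj1k (by omega))

theorem kgen_zero_mem_expressible (ℓ : ℕ) (h0l : 0 < ℓ) (hl : ℓ < n) :
    of (Gen.kgen 0 ℓ h0l hl) ∈ (conGen (GRel n)).expressible IsBasic := by
  obtain rfl | h1l := (Nat.one_le_iff_ne_zero.mpr h0l.ne').eq_or_lt
  · exact Con.of_mem_expressible ⟨rfl, rfl⟩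
  · exact Con.conj_mem_expressible (kgen_zero_rel_conj ℓ h1l hl)
      (xgen_mem_expressible 1 ℓ h1l hl) (Con.of_mem_expressible ⟨rfl, rfl⟩)

theorem gen_mem_expressible (g : Gen n) :
    of g ∈ (conGen (GRel n)).expressible IsBasic := by
  cases g with
  | igen j hj =>
    obtain rfl | h0j := j.eq_zero_or_pos
    · exact Con.of_mem_expressible rfl
    · exact Con.conj_mem_expressible (igen_rel_conj j h0j hj)
        (xgen_mem_expressible 0 j h0j hj) (Con.of_mem_expressible rfl)
  | xgen j k hjk hk => exact xgen_mem_expressible j k hjk hk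
  | kgen j ℓ hjl hl =>
    obtain rfl | h0j := j.eq_zero_or_pos
    · exact kgen_zero_mem_expressible ℓ hjl hl
    · exact Con.conj_mem_expressible (kgen_rel_conj j ℓ h0j hjl hl)
        (xgen_mem_expressible 0 j h0j (hjl.trans hl))
        (kgen_zero_mem_expressible ℓ (h0j.trans hjl) hl)

/-- every generator is ≈_R-equivalent to a word of basic generators;
in particular the four listed equivalences hold. -/
theorem stmt_15 (n : ℕ) :
    (∀ g : Gen n, ∃ w : FreeMonoid (Gen n),
      (∀ a ∈ FreeMonoid.toList w, IsBasic a) ∧ conGen (GRel n) (of g) w) ∧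
    (∀ (j : ℕ) (h1 : 1 ≤ j) (hj : j < n),
      conGen (GRel n) (of (Gen.igen j hj))
        (of (Gen.xgen 0 j h1 hj) * of (Gen.igen 0 (Nat.lt_of_le_of_lt (Nat.zero_le j) hj)) *
         of (Gen.xgen 0 j h1 hj))) ∧
    (∀ (j ℓ : ℕ) (h0j : 0 < j) (hjl : j < ℓ) (hl : ℓ < n),
      conGen (GRel n) (of (Gen.kgen j ℓ hjl hl))
        (of (Gen.xgen 0 j h0j (hjl.trans hl)) * of (Gen.kgen 0 ℓ (h0j.trans hjl) hl) *
         of (Gen.xgen 0 j h0j (hjl.trans hl)))) ∧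
    (∀ (ℓ : ℕ) (h1l : 1 < ℓ) (hl : ℓ < n),
      conGen (GRel n) (of (Gen.kgen 0 ℓ (Nat.lt_of_lt_of_le Nat.zero_lt_one h1l.le) hl))
        (of (Gen.xgen 1 ℓ h1l hl) * of (Gen.kgen 0 1 Nat.zero_lt_one (h1l.trans hl)) *
         of (Gen.xgen 1 ℓ h1l hl))) ∧
    (∀ (j ℓ : ℕ) (hj1l : j + 1 < ℓ) (hl : ℓ < n),
      conGen (GRel n) (of (Gen.xgen j ℓ ((Nat.lt_succ_self j).trans hj1l) hl))
        (of (Gen.xgen j (j + 1) (Nat.lt_succ_self j) (hj1l.trans hl)) *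
         of (Gen.xgen (j + 1) ℓ hj1l hl) *
         of (Gen.xgen j (j + 1) (Nat.lt_succ_self j) (hj1l.trans hl)))) := by
  exact ⟨gen_mem_expressible, igen_rel_conj, kgen_rel_conj, kgen_zero_rel_conj, xgen_rel_conj⟩

end
end

section
/- For all indices 0 ≤ j < ℓ < n, the following relational equivalence is a consequence of R: K†_{[j,ℓ]}·i_{[j]} ≈_R i_{[j]}·i_{[ℓ]}·X_{[j,ℓ]}·K†_{[j,ℓ]}·i_{[ℓ]}, where K†_{[j,ℓ]} abbreviates the word K_{[j,ℓ]}⁷. -/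
open Matrix

noncomputable section

/-!
Modulo R, relations (16), (1) and (4) make `K²` the inverse of `i_{[j]} i_{[ℓ]}`, an element of
order 4, so `K⁶ = i_{[j]} i_{[ℓ]}` and `K† = i_{[j]} i_{[ℓ]} K`. The claim then reduces to
`K i_{[j]} = X_{[j,ℓ]} K† i_{[ℓ]}`, obtained by moving the phases `i` across `K` with (15) and (13)
and across `X` with (10).
-/

section MonoidRelations

variable {M : Type*} [Monoid M]

theorem eq_pow_of_mul_eq_one_of_pow_succ_eq_one {a u : M} {m : ℕ} (hau : a * u = 1)
    (hu : u ^ (m + 1) = 1) : a = u ^ m := by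
  calc a = a * u ^ (m + 1) := by rw [hu, mul_one]
    _ = a * u * u ^ m := by rw [pow_succ', mul_assoc]
    _ = u ^ m := by rw [hau, one_mul]

theorem pow_seven_mul_eq {A I X K : M} (hA : A ^ 4 = 1) (hI : I ^ 4 = 1) (hX : X ^ 2 = 1)
    (hIX : I * X = X * A) (hKI : K * I ^ 2 = X * K) (hKAI : K * A * I = A * I * K)
    (hK : K ^ 2 * A * I = 1) (hAI : Commute A I) :
    K ^ 7 * A = A * I * X * K ^ 7 * I := by
  have hAI4 : (A * I) ^ 4 = 1 := by rw [hAI.mul_pow, hA, hI, one_mul]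
  have hK2 : K ^ 2 = (A * I) ^ 3 :=
    eq_pow_of_mul_eq_one_of_pow_succ_eq_one (by rw [← mul_assoc, hK]) hAI4
  have hK7 : K ^ 7 = A * I * K := by
    calc K ^ 7 = (K ^ 2) ^ 3 * K := by rw [← pow_mul, ← pow_succ]
      _ = ((A * I) ^ 4) ^ 2 * (A * I) * K := by rw [hK2, ← pow_mul, ← pow_mul, ← pow_succ]
      _ = A * I * K := by rw [hAI4, one_pow, one_mul]
  have hXI : X * I = A * X := by
    calc X * I = X * (I * X) * X := by rw [mul_assoc, mul_assoc, ← sq, hX, mul_one]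
      _ = A * X := by rw [hIX, ← mul_assoc, ← sq, hX, one_mul]
  have hKA : K * A = X * K ^ 7 * I := by
    calc K * A = K * A * I * I ^ 3 := by rw [mul_assoc (K * A), ← pow_succ', hI, mul_one]
      _ = I * A * (K * I ^ 2) * I := by
        rw [hKAI, hAI.eq, pow_succ I 2]; simp only [mul_assoc]
      _ = I * (A * X) * K * I := by rw [hKI]; simp only [mul_assoc]
      _ = X * (A * I * K) * I := by rw [← hXI, ← mul_assoc I X, hIX]; simp only [mul_assoc]
      _ = X * K ^ 7 * I := by rw [hK7]
  calc K ^ 7 * A = A * I * (K * A) := by rw [hK7, mul_assoc]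
    _ = A * I * X * K ^ 7 * I := by rw [hKA]; simp only [mul_assoc]

end MonoidRelations

open FreeMonoid in
/-- K†_{[j,ℓ]}·i_{[j]} ≈_R i_{[j]}·i_{[ℓ]}·X_{[j,ℓ]}·K†_{[j,ℓ]}·i_{[ℓ]},
where K†_{[j,ℓ]} abbreviates the word K_{[j,ℓ]}⁷. -/
theorem stmt_16 (n : ℕ) (j ℓ : ℕ) (hjl : j < ℓ) (hl : ℓ < n) :
    conGen (GRel n)
      (of (Gen.kgen j ℓ hjl hl) ^ 7 * of (Gen.igen j (hjl.trans hl)))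
      (of (Gen.igen j (hjl.trans hl)) * of (Gen.igen ℓ hl) * of (Gen.xgen j ℓ hjl hl) *
       of (Gen.kgen j ℓ hjl hl) ^ 7 * of (Gen.igen ℓ hl)) := by
  have hrel : ∀ {w v}, GRel n w v → Con.mk' (conGen (GRel n)) w = Con.mk' (conGen (GRel n)) v :=
    fun h => (Con.eq _).mpr (.of _ _ h)
  refine (Con.eq _).mp ?_
  change Con.mk' _ _ = Con.mk' _ _
  simp only [map_mul, map_pow]
  have hjn := hjl.trans hl
  exact pow_seven_mul_eq
    (by simpa only [map_pow, map_one] using hrel (GRel.r1 j hjn))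
    (by simpa only [map_pow, map_one] using hrel (GRel.r1 ℓ hl))
    (by simpa only [map_pow, map_one] using hrel (GRel.r2 j ℓ hjl hl))
    (by simpa only [map_mul] using hrel (GRel.r10 j ℓ hjl hl))
    (by simpa only [map_mul, map_pow] using hrel (GRel.r13 j ℓ hjl hl))
    (by simpa only [map_mul] using hrel (GRel.r15 j ℓ hjl hl))
    (by simpa only [map_mul, map_pow, map_one] using hrel (GRel.r16 j ℓ hjl hl))
    (by simpa only [map_mul, commute_iff_eq] using hrel (GRel.r4 j ℓ hjn hl hjl.ne))

end
end

section
/- For all pairwise distinct indices j, j', ℓ, ℓ' in {0,…,n−1} with j < j', j < ℓ, ℓ < ℓ', j' < ℓ', and ℓ < j', the following relational equivalence is a consequence of R: K†_{[ℓ,ℓ']}·K†_{[j,j']}·K†_{[j',ℓ']}·K†_{[j,ℓ]}·X_{[ℓ,j']} ≈_R X_{[ℓ,j']}·K†_{[ℓ,ℓ']}·K†_{[j,j']}·K†_{[j',ℓ']}·K†_{[j,ℓ]}, where K†_{[a,b]} abbreviates the word K_{[a,b]}⁷. -/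
open Matrix

noncomputable section

/-!
Write `a, b, c, d` for `K_{[ℓ,ℓ']}, K_{[j,j']}, K_{[j',ℓ']}, K_{[j,ℓ]}` and `x` for the
involution `X_{[ℓ,j']}`. Relations (12) and (12') say that conjugation by `x` exchanges
`a ↔ c` and `b ↔ d`, so it exchanges `P = a⁷b⁷` and `Q = c⁷d⁷`. Relations (9) and (17) make
`ab` and `cd` commute, hence `P` and `Q` commute and `x` commutes with `PQ`.
-/

theorem SemiconjBy.symm_of_mul_self_eq_one {M : Type*} [Monoid M] {x p q : M} (hx : x * x = 1)
    (h : SemiconjBy x p q) : SemiconjBy x q p :=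
  calc x * q = x * (q * x) * x := by rw [mul_assoc, mul_assoc, hx, mul_one]
    _ = p * x := by rw [← h, ← mul_assoc, hx, one_mul]

theorem commute_pow_mul_pow_of_swap {M : Type*} [Monoid M] {a b c d x : M} (k : ℕ)
    (hx : x * x = 1) (hac : SemiconjBy x a c) (hbd : SemiconjBy x b d)
    (hab : Commute a b) (hcd : Commute c d) (habcd : Commute (a * b) (c * d)) :
    Commute x (a ^ k * b ^ k * (c ^ k * d ^ k)) := by
  have hPQ : SemiconjBy x (a ^ k * b ^ k) (c ^ k * d ^ k) :=
    (hac.pow_right k).mul_right (hbd.pow_right k)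
  have hP_Q : Commute (a ^ k * b ^ k) (c ^ k * d ^ k) := by
    rw [← hab.mul_pow, ← hcd.mul_pow]
    exact habcd.pow_pow k k
  have := hPQ.mul_right (hPQ.symm_of_mul_self_eq_one hx)
  rwa [← hP_Q.eq] at this

open FreeMonoid in
/-- for j < ℓ < j' < ℓ' < n,
K†_{[ℓ,ℓ']}·K†_{[j,j']}·K†_{[j',ℓ']}·K†_{[j,ℓ]}·X_{[ℓ,j']}
  ≈_R X_{[ℓ,j']}·K†_{[ℓ,ℓ']}·K†_{[j,j']}·K†_{[j',ℓ']}·K†_{[j,ℓ]},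
where K†_{[a,b]} abbreviates the word K_{[a,b]}⁷. -/
theorem stmt_18 (n : ℕ) (j ℓ j' ℓ' : ℕ)
    (h1 : j < ℓ) (h2 : ℓ < j') (h3 : j' < ℓ') (h4 : ℓ' < n) :
    conGen (GRel n)
      (of (Gen.kgen ℓ ℓ' (h2.trans h3) h4) ^ 7 *
       of (Gen.kgen j j' (h1.trans h2) (h3.trans h4)) ^ 7 *
       of (Gen.kgen j' ℓ' h3 h4) ^ 7 *
       of (Gen.kgen j ℓ h1 ((h2.trans h3).trans h4)) ^ 7 *
       of (Gen.xgen ℓ j' h2 (h3.trans h4)))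
      (of (Gen.xgen ℓ j' h2 (h3.trans h4)) *
       of (Gen.kgen ℓ ℓ' (h2.trans h3) h4) ^ 7 *
       of (Gen.kgen j j' (h1.trans h2) (h3.trans h4)) ^ 7 *
       of (Gen.kgen j' ℓ' h3 h4) ^ 7 *
       of (Gen.kgen j ℓ h1 ((h2.trans h3).trans h4)) ^ 7) := by
  rw [← Con.eq]
  simp only [← Con.coe_mk', map_mul, map_pow]
  set π := (conGen (GRel n)).mk'
  have rel {u v} (h : GRel n u v) : π u = π v := (Con.eq _).mpr (.of _ _ h)
  have hx := rel (.r2 ℓ j' h2 (h3.trans h4))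
  have hca := rel (.r12 ℓ j' ℓ' h2 h3 h4)
  have hbd := rel (.r12' j ℓ j' h1 h2 (h3.trans h4))
  have hba := rel (.r9 j j' ℓ ℓ' (h1.trans h2) (h3.trans h4) (h2.trans h3) h4
    h1.ne (h1.trans (h2.trans h3)).ne h2.ne' h3.ne)
  have hdc := rel (.r9 j ℓ j' ℓ' h1 ((h2.trans h3).trans h4) h3 h4
    (h1.trans h2).ne ((h1.trans h2).trans h3).ne h2.ne (h2.trans h3).ne)
  have h17 := rel (.r17 j ℓ j' ℓ' h1 h3 (h1.trans h2) (h2.trans h3) h4 h2.ne)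
  simp only [map_mul, map_one, pow_two] at hx hca hbd hba hdc h17
  set a := π (of (Gen.kgen ℓ ℓ' (h2.trans h3) h4))
  set b := π (of (Gen.kgen j j' (h1.trans h2) (h3.trans h4)))
  set c := π (of (Gen.kgen j' ℓ' h3 h4))
  set d := π (of (Gen.kgen j ℓ h1 ((h2.trans h3).trans h4)))
  have habcd : Commute (a * b) (c * d) := by
    rw [Commute, SemiconjBy, ← hba, ← hdc]
    simpa only [mul_assoc] using h17.symm
  have := commute_pow_mul_pow_of_swap 7 hx hca.symm
    (SemiconjBy.symm_of_mul_self_eq_one hx hbd.symm) (Commute.symm hba) (Commute.symm hdc) habcd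
  simp only [mul_assoc] at this ⊢
  exact this.eq.symm

end
end

section
/- Let j, k, ℓ, m ∈ {0,…,n−1} be pairwise distinct indices with j < k, ℓ < m, j < ℓ, and k < m. Then the following identity holds between products of n×n two-level matrices: K_{[j,k]}·K_{[ℓ,m]}·K_{[j,ℓ]}·K_{[k,m]} = K_{[j,ℓ]}·K_{[k,m]}·K_{[j,k]}·K_{[ℓ,m]}. -/
open Matrix

noncomputable section

/-! Identify the coordinates `j, k, ℓ, m` with `(0,0), (0,1), (1,0), (1,1)` in `Fin 2 × Fin 2`.
On their span `U_{[j,k]} U_{[ℓ,m]}` acts as `1 ⊗ U` and `U_{[j,ℓ]} U_{[k,m]}` as `U ⊗ 1`, and both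
products are the identity on the remaining coordinates. Since `1 ⊗ U` and `U ⊗ 1` commute (their
products in either order are `U ⊗ U`), so do the two products, for every `2 × 2` matrix `U`. -/

open Function Kronecker

namespace Matrix

variable {α β γ : Type*} (R : Type*) [DecidableEq α] [DecidableEq β] [CommRing R]

def embeddingMatrix (e : α ↪ β) : Matrix β α R := (1 : Matrix β β R).submatrix id e

variable {R}

theorem embeddingMatrix_transpose_mul_self [Fintype β] (e : α ↪ β) :
    (embeddingMatrix R e)ᵀ * embeddingMatrix R e = 1 := by
  rw [embeddingMatrix, transpose_submatrix, transpose_one,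
    ← submatrix_mul _ _ _ _ _ bijective_id, Matrix.mul_one, submatrix_one_embedding]

variable [Fintype α]

/-- The matrix acting as `M` on the coordinates in the range of `e` and as the identity on the
others. -/
def extendId (e : α ↪ β) (M : Matrix α α R) : Matrix β β R :=
  1 - embeddingMatrix R e * (embeddingMatrix R e)ᵀ +
    embeddingMatrix R e * M * (embeddingMatrix R e)ᵀ

theorem embeddingMatrix_trans [DecidableEq γ] (f : γ ↪ α) (e : α ↪ β) :
    embeddingMatrix R (f.trans e) = embeddingMatrix R e * embeddingMatrix R f := by
  ext b c
  simp [embeddingMatrix, mul_apply, one_apply]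

theorem extendId_extendId [Fintype γ] [DecidableEq γ] (f : γ ↪ α) (e : α ↪ β)
    (M : Matrix γ γ R) : extendId e (extendId f M) = extendId (f.trans e) M := by
  simp only [extendId, embeddingMatrix_trans, transpose_mul, Matrix.mul_add, Matrix.add_mul,
    Matrix.mul_sub, Matrix.sub_mul, Matrix.mul_one, Matrix.mul_assoc]
  abel

variable [Fintype β]

theorem extendId_mul (e : α ↪ β) (M N : Matrix α α R) :
    extendId e M * extendId e N = extendId e (M * N) := by
  have cancel (X : Matrix α β R) : (embeddingMatrix R e)ᵀ * (embeddingMatrix R e * X) = X := by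
    rw [← Matrix.mul_assoc, embeddingMatrix_transpose_mul_self, Matrix.one_mul]
  simp only [extendId, mul_add, add_mul, mul_sub, sub_mul, Matrix.mul_one, Matrix.one_mul,
    Matrix.mul_assoc, cancel]
  abel

theorem commute_extendId {M N : Matrix α α R} (h : Commute M N) (e : α ↪ β) :
    Commute (extendId e M) (extendId e N) := by
  rw [Commute, SemiconjBy, extendId_mul, extendId_mul, h.eq]

end Matrix

theorem Matrix.commute_one_kronecker_kronecker_one {ι κ R : Type*} [Fintype ι] [Fintype κ]
    [DecidableEq ι] [DecidableEq κ] [CommRing R] (A : Matrix κ κ R) (B : Matrix ι ι R) :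
    Commute ((1 : Matrix ι ι R) ⊗ₖ A) (B ⊗ₖ (1 : Matrix κ κ R)) := by
  rw [Commute, SemiconjBy, ← mul_kronecker_mul, ← mul_kronecker_mul, Matrix.one_mul,
    Matrix.mul_one, Matrix.one_mul, Matrix.mul_one]

theorem twoLevel_eq_extendId {n : ℕ} (U : Matrix (Fin 2) (Fin 2) ℂ) (e : Fin 2 ↪ Fin n) :
    twoLevel n U (e 0) (e 1) = extendId e U := by
  have h01 : e 0 ≠ e 1 := e.injective.ne (by decide)
  ext a b
  simp only [twoLevel, extendId, embeddingMatrix, Matrix.add_apply, Matrix.sub_apply, mul_apply,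
    transpose_apply, submatrix_apply, one_apply, Fin.sum_univ_two, id]
  split_ifs <;> simp_all

theorem extendId_sectR_mul_extendId_sectR (U : Matrix (Fin 2) (Fin 2) ℂ) :
    extendId (Embedding.sectR (0 : Fin 2) (Fin 2)) U *
      extendId (Embedding.sectR (1 : Fin 2) (Fin 2)) U = 1 ⊗ₖ U := by
  ext ⟨a, b⟩ ⟨c, d⟩
  fin_cases a <;> fin_cases b <;> fin_cases c <;> fin_cases d <;>
    simp [extendId, embeddingMatrix, mul_apply, one_apply, Fintype.sum_prod_type, Fin.sum_univ_two]

theorem extendId_sectL_mul_extendId_sectL (U : Matrix (Fin 2) (Fin 2) ℂ) :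
    extendId (Embedding.sectL (Fin 2) (0 : Fin 2)) U *
      extendId (Embedding.sectL (Fin 2) (1 : Fin 2)) U = U ⊗ₖ 1 := by
  ext ⟨a, b⟩ ⟨c, d⟩
  fin_cases a <;> fin_cases b <;> fin_cases c <;> fin_cases d <;>
    simp [extendId, embeddingMatrix, mul_apply, one_apply, Fintype.sum_prod_type, Fin.sum_univ_two]

section Square

variable {n : ℕ} (U : Matrix (Fin 2) (Fin 2) ℂ) (e : Fin 2 × Fin 2 ↪ Fin n)

theorem twoLevel_row_eq (i : Fin 2) :
    twoLevel n U (e (i, 0)) (e (i, 1)) = extendId e (extendId (Embedding.sectR i (Fin 2)) U) := by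
  rw [extendId_extendId, ← twoLevel_eq_extendId]
  rfl

theorem twoLevel_column_eq (i : Fin 2) :
    twoLevel n U (e (0, i)) (e (1, i)) = extendId e (extendId (Embedding.sectL (Fin 2) i) U) := by
  rw [extendId_extendId, ← twoLevel_eq_extendId]
  rfl

theorem commute_twoLevel_rows_twoLevel_columns :
    Commute (twoLevel n U (e (0, 0)) (e (0, 1)) * twoLevel n U (e (1, 0)) (e (1, 1)))
      (twoLevel n U (e (0, 0)) (e (1, 0)) * twoLevel n U (e (0, 1)) (e (1, 1))) := by
  rw [twoLevel_row_eq, twoLevel_row_eq, twoLevel_column_eq, twoLevel_column_eq, extendId_mul,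
    extendId_mul, extendId_sectR_mul_extendId_sectR, extendId_sectL_mul_extendId_sectL]
  exact commute_extendId (commute_one_kronecker_kronecker_one U U) e

end Square

/-- relation (17) as a matrix identity: for pairwise distinct
j < k, ℓ < m with j < ℓ and k < m,
K_{[j,k]}·K_{[ℓ,m]}·K_{[j,ℓ]}·K_{[k,m]} = K_{[j,ℓ]}·K_{[k,m]}·K_{[j,k]}·K_{[ℓ,m]}. -/
theorem stmt_19 (n : ℕ) (j k ℓ m : Fin n)
    (hjk : j < k) (hlm : ℓ < m) (hjl : j < ℓ) (hkm : k < m) (hkl : k ≠ ℓ) :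
    twoLevel n Kmat j k * twoLevel n Kmat ℓ m * twoLevel n Kmat j ℓ * twoLevel n Kmat k m =
    twoLevel n Kmat j ℓ * twoLevel n Kmat k m * twoLevel n Kmat j k * twoLevel n Kmat ℓ m := by
  have hjm : j < m := hjl.trans hlm
  let e : Fin 2 × Fin 2 ↪ Fin n := ⟨fun p => ![![j, k], ![ℓ, m]] p.1 p.2, by
    rintro ⟨a, b⟩ ⟨c, d⟩ h
    fin_cases a <;> fin_cases b <;> fin_cases c <;> fin_cases d <;> simp_all [hkl.symm]⟩
  have h := (commute_twoLevel_rows_twoLevel_columns Kmat e).eq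
  rw [← mul_assoc, ← mul_assoc] at h
  exact h

end
end
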